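/- arXiv:math/0308181 — 3 statements merged into one kernel-verified Lean document; each statement's English description precedes it below -/
import Mathlib

section
/- Let τ be a positive Borel measure on ℝ with ∫ dτ(λ)/(1+λ²) < ∞, and suppose τ is invariant under translation by b (i.e., τ(Δ+b) = τ(Δ) for all Borel sets Δ). Then the function F(z) = ∫ [1/(λ−z) − λ/(1+λ²)] dτ(λ) defined for Im z ≠ 0 satisfies F(z+b) = F(z) for all nonreal z. -/
/-!
Subtracting two values of `F` cancels the compensating term, so
`F w - F w' = ∫ (1/(λ-w) - 1/(λ-w')) dτ`, an integral of an integrable function.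
Translation invariance of `τ` then gives `F (w + b) - F (w' + b) = F w - F w'`, i.e. the
defect `F (w + b) - F w` does not depend on `w`. Taking `w = i y` with `y → ∞`, dominated
convergence (with majorant `2|b|/(1+λ²)`) shows the defect tends to `0`.
-/

open MeasureTheory Complex Filter Topology

noncomputable def herglotzKernel (w : ℂ) (x : ℝ) : ℂ :=
  1 / ((x : ℂ) - w) - (x : ℂ) / (1 + (x : ℂ) ^ 2)

lemma abs_im_le_norm_ofReal_sub (x : ℝ) (w : ℂ) : |w.im| ≤ ‖(x : ℂ) - w‖ := by
  simpa using abs_im_le_norm ((x : ℂ) - w)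

lemma ofReal_sub_ne_zero_of_im_ne_zero (x : ℝ) {w : ℂ} (hw : w.im ≠ 0) : (x : ℂ) - w ≠ 0 :=
  norm_pos_iff.mp ((abs_pos.mpr hw).trans_le (abs_im_le_norm_ofReal_sub x w))

lemma norm_one_add_ofReal_sq (x : ℝ) : ‖1 + (x : ℂ) ^ 2‖ = 1 + x ^ 2 := by
  rw [← ofReal_one, ← ofReal_pow, ← ofReal_add, norm_real, Real.norm_of_nonneg (by positivity)]

lemma norm_herglotzKernel_le {w : ℂ} (hw : w.im ≠ 0) (x : ℝ) :
    ‖herglotzKernel w x‖ ≤ ((1 + ‖w‖ ^ 2) / |w.im| + ‖w‖) * (1 / (1 + x ^ 2)) := by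
  have him : 0 < |w.im| := abs_pos.mpr hw
  have hdist := abs_im_le_norm_ofReal_sub x w
  have hsub := ofReal_sub_ne_zero_of_im_ne_zero x hw
  have hsq : (1 : ℂ) + (x : ℂ) ^ 2 ≠ 0 := by
    rw [← norm_pos_iff, norm_one_add_ofReal_sq]; positivity
  -- The numerator `1 + x w` is rewritten so that `‖x - w‖ ≥ |w.im|` bounds it by `C ‖x - w‖`.
  have hkernel : herglotzKernel w x = ((1 + w ^ 2) + w * ((x : ℂ) - w)) /
      (((x : ℂ) - w) * (1 + (x : ℂ) ^ 2)) := by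
    unfold herglotzKernel; field_simp; ring
  have hnum : ‖(1 + w ^ 2) + w * ((x : ℂ) - w)‖ ≤
      ((1 + ‖w‖ ^ 2) / |w.im| + ‖w‖) * ‖(x : ℂ) - w‖ := calc
    _ ≤ (1 + ‖w‖ ^ 2) + ‖w‖ * ‖(x : ℂ) - w‖ := by
      refine (norm_add_le _ _).trans ?_
      rw [norm_mul]
      gcongr
      exact (norm_add_le _ _).trans (by simp)
    _ ≤ (1 + ‖w‖ ^ 2) / |w.im| * ‖(x : ℂ) - w‖ + ‖w‖ * ‖(x : ℂ) - w‖ := by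
      gcongr
      rw [div_mul_eq_mul_div, le_div_iff₀ him]
      gcongr
    _ = _ := by ring
  rw [hkernel, norm_div, norm_mul, norm_one_add_ofReal_sq, div_le_iff₀ (by positivity)]
  calc _ ≤ _ := hnum
    _ = _ := by field_simp

lemma integrable_herglotzKernel {τ : Measure ℝ}
    (hfin : Integrable (fun x : ℝ => 1 / (1 + x ^ 2)) τ) {w : ℂ} (hw : w.im ≠ 0) :
    Integrable (herglotzKernel w) τ :=
  (hfin.const_mul _).mono' (by unfold herglotzKernel; fun_prop)
    (ae_of_all _ (norm_herglotzKernel_le hw))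

lemma integral_comp_add_right_of_map_sub_eq {E : Type*} [NormedAddCommGroup E] [NormedSpace ℝ E]
    {τ : Measure ℝ} {b : ℝ} (hinv : Measure.map (fun x : ℝ => x - b) τ = τ) (f : ℝ → E) :
    ∫ x, f (x + b) ∂τ = ∫ x, f x ∂τ := by
  conv_lhs => rw [← hinv]
  rw [show (fun x : ℝ => x - b) = MeasurableEquiv.subRight b from rfl, integral_map_equiv]
  exact integral_congr_ae (ae_of_all _ fun x => congrArg f (sub_add_cancel x b))

lemma one_add_sq_le_two_mul_norm_ofReal_sub_sq (x : ℝ) {w : ℂ} (hw : 1 + |w.re| ≤ w.im) :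
    1 + x ^ 2 ≤ 2 * ‖(x : ℂ) - w‖ ^ 2 := by
  rw [Complex.sq_norm, normSq_apply]
  simp only [sub_re, ofReal_re, sub_im, ofReal_im, zero_sub, neg_mul_neg]
  nlinarith [sq_nonneg (x - 2 * w.re), abs_nonneg w.re, sq_abs w.re,
    mul_self_le_mul_self (by positivity) hw]

lemma norm_one_div_sub_sub_one_div_sub (x : ℝ) {w w' : ℂ} (hw : w.im ≠ 0) (hw' : w'.im ≠ 0) :
    ‖1 / ((x : ℂ) - w) - 1 / ((x : ℂ) - w')‖ = ‖w - w'‖ / (‖(x : ℂ) - w‖ * ‖(x : ℂ) - w'‖) := by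
  rw [one_div, one_div, inv_sub_inv (ofReal_sub_ne_zero_of_im_ne_zero x hw)
    (ofReal_sub_ne_zero_of_im_ne_zero x hw'), norm_div, norm_mul, sub_sub_sub_cancel_left]

lemma tendsto_integral_one_div_sub_sub_one_div_sub {τ : Measure ℝ}
    (hfin : Integrable (fun x : ℝ => 1 / (1 + x ^ 2)) τ) (b : ℝ) :
    Tendsto (fun y : ℝ => ∫ x, (1 / ((x : ℂ) - (y * I + b)) - 1 / ((x : ℂ) - y * I)) ∂τ)
      atTop (𝓝 0) := by
  have hnorm : ∀ y : ℝ, 0 < y → ∀ x : ℝ,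
      ‖1 / ((x : ℂ) - (y * I + b)) - 1 / ((x : ℂ) - y * I)‖ =
        |b| / (‖(x : ℂ) - (y * I + b)‖ * ‖(x : ℂ) - y * I‖) := fun y hy x => by
    rw [norm_one_div_sub_sub_one_div_sub x (by simp [hy.ne']) (by simp [hy.ne'])]
    simp
  have hbound : ∀ y : ℝ, 1 + |b| ≤ y → ∀ x : ℝ,
      ‖1 / ((x : ℂ) - (y * I + b)) - 1 / ((x : ℂ) - y * I)‖ ≤ 2 * |b| * (1 / (1 + x ^ 2)) := by
    intro y hy x
    have hA := one_add_sq_le_two_mul_norm_ofReal_sub_sq x (w := y * I + b) (by simpa using hy)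
    have hB := one_add_sq_le_two_mul_norm_ofReal_sub_sq x (w := y * I)
      (by simpa using (le_add_of_nonneg_right (abs_nonneg b)).trans hy)
    have hAB : 1 + x ^ 2 ≤ 2 * (‖(x : ℂ) - (y * I + b)‖ * ‖(x : ℂ) - y * I‖) := by
      refine (pow_le_pow_iff_left₀ (by positivity) (by positivity) two_ne_zero).mp ?_
      nlinarith [mul_le_mul hA hB (by positivity) (by positivity)]
    have hpos : 0 < ‖(x : ℂ) - (y * I + b)‖ * ‖(x : ℂ) - y * I‖ := by
      nlinarith [sq_nonneg x]
    rw [hnorm y (by linarith [abs_nonneg b]) x, div_le_iff₀ hpos]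
    calc |b| = 2 * |b| * (1 / (1 + x ^ 2)) * ((1 + x ^ 2) / 2) := by field_simp
      _ ≤ _ := by gcongr; linarith
  have hlim : ∀ x : ℝ,
      Tendsto (fun y : ℝ => 1 / ((x : ℂ) - (y * I + b)) - 1 / ((x : ℂ) - y * I)) atTop (𝓝 0) := by
    intro x
    rw [tendsto_zero_iff_norm_tendsto_zero]
    refine squeeze_zero' (Eventually.of_forall fun _ => norm_nonneg _) ?_
      (tendsto_const_nhds.div_atTop (tendsto_id.atTop_mul_atTop₀ tendsto_id) :
        Tendsto (fun y : ℝ => |b| / (y * y)) atTop (𝓝 0))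
    filter_upwards [eventually_gt_atTop 0] with y hy
    rw [hnorm y hy x]
    have hy_le : ∀ c : ℝ, y ≤ ‖(x : ℂ) - (y * I + c)‖ := fun c => by
      simpa [abs_of_pos hy] using abs_im_le_norm_ofReal_sub x (y * I + c)
    gcongr
    · exact hy_le b
    · simpa using hy_le 0
  simpa using tendsto_integral_filter_of_dominated_convergence _
    (Eventually.of_forall fun y => by fun_prop)
    ((eventually_ge_atTop (1 + |b|)).mono fun y hy => ae_of_all _ (hbound y hy))
    (hfin.const_mul (2 * |b|)) (ae_of_all _ hlim)

section HerglotzFunction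

variable {τ : Measure ℝ} {F : ℂ → ℂ}

lemma sub_eq_integral_one_div_sub_sub_one_div_sub
    (hfin : Integrable (fun x : ℝ => 1 / (1 + x ^ 2)) τ)
    (hF : ∀ z : ℂ, z.im ≠ 0 → F z = ∫ x, herglotzKernel z x ∂τ)
    {w w' : ℂ} (hw : w.im ≠ 0) (hw' : w'.im ≠ 0) :
    F w - F w' = ∫ x, (1 / ((x : ℂ) - w) - 1 / ((x : ℂ) - w')) ∂τ := by
  rw [hF w hw, hF w' hw', ← integral_sub (integrable_herglotzKernel hfin hw)
    (integrable_herglotzKernel hfin hw')]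
  simp only [herglotzKernel, sub_sub_sub_cancel_right]

lemma sub_add_eq_sub_add_of_map_sub_eq
    (hfin : Integrable (fun x : ℝ => 1 / (1 + x ^ 2)) τ) {b : ℝ}
    (hinv : Measure.map (fun x : ℝ => x - b) τ = τ)
    (hF : ∀ z : ℂ, z.im ≠ 0 → F z = ∫ x, herglotzKernel z x ∂τ)
    {w w' : ℂ} (hw : w.im ≠ 0) (hw' : w'.im ≠ 0) :
    F (w + b) - F w = F (w' + b) - F w' := by
  have hwb : (w + b).im ≠ 0 := by simpa using hw
  have hw'b : (w' + b).im ≠ 0 := by simpa using hw'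
  have hshift : F (w + b) - F (w' + b) = F w - F w' := calc
    _ = ∫ x, (1 / ((x : ℂ) - (w + b)) - 1 / ((x : ℂ) - (w' + b))) ∂τ :=
      sub_eq_integral_one_div_sub_sub_one_div_sub hfin hF hwb hw'b
    _ = ∫ x, (1 / (((x + b : ℝ) : ℂ) - (w + b)) - 1 / (((x + b : ℝ) : ℂ) - (w' + b))) ∂τ :=
      (integral_comp_add_right_of_map_sub_eq hinv _).symm
    _ = ∫ x, (1 / ((x : ℂ) - w) - 1 / ((x : ℂ) - w')) ∂τ := by
      simp only [ofReal_add, add_sub_add_right_eq_sub]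
    _ = F w - F w' := (sub_eq_integral_one_div_sub_sub_one_div_sub hfin hF hw hw').symm
  linear_combination hshift

end HerglotzFunction

/-- If `τ` is a positive Borel measure on `ℝ` with `∫ dτ(λ)/(1+λ²) < ∞` which is
invariant under translation by `b`, then the Herglotz function
`F(z) = ∫ [1/(λ−z) − λ/(1+λ²)] dτ(λ)` satisfies `F(z+b) = F(z)` for nonreal `z`. -/
theorem stmt_0 (τ : Measure ℝ) (b : ℝ)
    (hfin : Integrable (fun l : ℝ => 1 / (1 + l ^ 2)) τ)
    (hinv : Measure.map (fun x : ℝ => x - b) τ = τ)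
    (F : ℂ → ℂ)
    (hF : ∀ z : ℂ, z.im ≠ 0 →
      F z = ∫ l : ℝ, (1 / ((l : ℂ) - z) - (l : ℂ) / (1 + (l : ℂ) ^ 2)) ∂τ)
    (z : ℂ) (hz : z.im ≠ 0) :
    F (z + (b : ℂ)) = F z := by
  have him : ∀ y : ℝ, 0 < y → (y * I).im ≠ 0 := fun y hy => by simp [hy.ne']
  have hlim : Tendsto (fun y : ℝ => F (y * I + b) - F (y * I)) atTop (𝓝 0) :=
    (tendsto_integral_one_div_sub_sub_one_div_sub hfin b).congr' <|
      (eventually_gt_atTop 0).mono fun y hy =>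
        (sub_eq_integral_one_div_sub_sub_one_div_sub hfin hF (by simpa using him y hy)
          (him y hy)).symm
  have hconst : ∀ᶠ y : ℝ in atTop, F (y * I + b) - F (y * I) = F (z + b) - F z :=
    (eventually_gt_atTop 0).mono fun y hy =>
      sub_add_eq_sub_add_of_map_sub_eq hfin hinv hF (him y hy) hz
  exact sub_eq_zero.mp (tendsto_nhds_unique tendsto_const_nhds (hlim.congr' hconst))
end

section
/- For Im z > 0, ∫_ℝ (λz+1)/((λ−z)(1+λ²)) · (1/π) dλ = i, and for Im z < 0 the same integral equals −i. -/
/-!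
Since `λ / (1 + λ²) = ((λ - i)⁻¹ + (λ + i)⁻¹) / 2`, the kernel
`(λz + 1) / ((λ - z)(1 + λ²)) = (λ - z)⁻¹ - λ / (1 + λ²)` is the average of
`(λ - z)⁻¹ - (λ - i)⁻¹` and `(λ - z)⁻¹ - (λ + i)⁻¹`.
For `Im u, Im v ≠ 0` the difference `(λ - u)⁻¹ - (λ - v)⁻¹` is integrable, being a
multiple of a product of two `L²` functions, and has the primitive `log (λ - u) - log (λ - v)`.
This tends to `0` at `+∞`, and, since `log (-w) = log w - π i sgn (Im w)`, to
`π i (sgn Im v - sgn Im u)` at `-∞`. So the difference integrates to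
`π i (sgn Im u - sgn Im v)`, and the kernel to `π i sgn (Im z)`.
-/

open MeasureTheory Complex Real Filter Topology

section CauchyKernel

variable {u v : ℂ}

lemma ofReal_sub_ne_zero (hu : u.im ≠ 0) (x : ℝ) : (x : ℂ) - u ≠ 0 := fun h =>
  hu (by simpa using (congrArg im h).symm)

lemma ofReal_sub_mem_slitPlane (hu : u.im ≠ 0) (x : ℝ) : (x : ℂ) - u ∈ slitPlane :=
  mem_slitPlane_iff.2 (Or.inr (by simpa using hu))

lemma integrable_inv_sub_sq_add_sq (a : ℝ) {b : ℝ} (hb : b ≠ 0) :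
    Integrable fun x : ℝ => ((x - a) ^ 2 + b ^ 2)⁻¹ := by
  refine (((integrable_inv_one_add_sq.comp_div hb).comp_sub_right a).const_mul (b ^ 2)⁻¹).congr
    (Eventually.of_forall fun x => ?_)
  field_simp
  ring

lemma memLp_two_inv_ofReal_sub (hu : u.im ≠ 0) :
    MemLp (fun x : ℝ => ((x : ℂ) - u)⁻¹) 2 := by
  have hcont : Continuous fun x : ℝ => ((x : ℂ) - u)⁻¹ :=
    (continuous_ofReal.sub continuous_const).inv₀ (ofReal_sub_ne_zero hu)
  refine (memLp_two_iff_integrable_sq_norm hcont.aestronglyMeasurable).2 ?_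
  refine (integrable_inv_sub_sq_add_sq u.re hu).congr (Eventually.of_forall fun x => ?_)
  simp only [norm_inv, inv_pow, Complex.sq_norm, normSq_apply, sub_re, ofReal_re, sub_im,
    ofReal_im]
  ring

lemma integrable_inv_ofReal_sub_sub_inv_ofReal_sub (hu : u.im ≠ 0) (hv : v.im ≠ 0) :
    Integrable fun x : ℝ => ((x : ℂ) - u)⁻¹ - ((x : ℂ) - v)⁻¹ := by
  refine (((memLp_two_inv_ofReal_sub hu).integrable_mul (memLp_two_inv_ofReal_sub hv)).const_mul
    (u - v)).congr (Eventually.of_forall fun x => ?_)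
  have := ofReal_sub_ne_zero hu x
  have := ofReal_sub_ne_zero hv x
  simp only [Pi.mul_apply]
  field_simp
  ring

lemma hasDerivAt_log_ofReal_sub (hu : u.im ≠ 0) (x : ℝ) :
    HasDerivAt (fun y : ℝ => Complex.log ((y : ℂ) - u)) ((x : ℂ) - u)⁻¹ x := by
  simpa using
    ((hasDerivAt_id x).ofReal_comp.sub_const u).clog_real (ofReal_sub_mem_slitPlane hu x)

lemma log_neg_eq_log_sub {w : ℂ} (hw : w.im ≠ 0) :
    Complex.log (-w) = Complex.log w - π * Real.sign w.im * I := by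
  rw [Complex.log, Complex.log, norm_neg]
  rcases hw.lt_or_gt with hneg | hpos
  · rw [arg_neg_eq_arg_add_pi_of_im_neg hneg, Real.sign_of_neg hneg]
    push_cast
    ring
  · rw [arg_neg_eq_arg_sub_pi_of_im_pos hpos, Real.sign_of_pos hpos]
    push_cast
    ring

lemma tendsto_log_ofReal_sub_sub_log_atTop (u : ℂ) :
    Tendsto (fun x : ℝ => Complex.log ((x : ℂ) - u) - Real.log x) atTop (𝓝 0) := by
  have hdiv : Tendsto (fun x : ℝ => 1 - u * ((x⁻¹ : ℝ) : ℂ)) atTop (𝓝 1) := by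
    simpa using
      ((continuous_ofReal.tendsto 0).comp tendsto_inv_atTop_zero).const_mul u |>.const_sub 1
  have hlog := (continuousAt_clog one_mem_slitPlane).tendsto.comp hdiv
  rw [Complex.log_one] at hlog
  refine hlog.congr' ?_
  filter_upwards [eventually_gt_atTop 0, hdiv.eventually_ne one_ne_zero] with x hx hne
  have hsplit : (x : ℂ) - u = x * (1 - u * ((x⁻¹ : ℝ) : ℂ)) := by
    have : (x : ℂ) ≠ 0 := ofReal_ne_zero.2 hx.ne'
    push_cast
    field_simp
  rw [Function.comp_apply, hsplit, log_ofReal_mul hx hne]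
  ring

lemma tendsto_log_ofReal_sub_sub_log_ofReal_sub_atTop (u v : ℂ) :
    Tendsto (fun x : ℝ => Complex.log ((x : ℂ) - u) - Complex.log ((x : ℂ) - v)) atTop
      (𝓝 0) := by
  simpa using
    (tendsto_log_ofReal_sub_sub_log_atTop u).sub (tendsto_log_ofReal_sub_sub_log_atTop v)

lemma tendsto_log_ofReal_sub_sub_log_ofReal_sub_atBot (hu : u.im ≠ 0) (hv : v.im ≠ 0) :
    Tendsto (fun x : ℝ => Complex.log ((x : ℂ) - u) - Complex.log ((x : ℂ) - v)) atBot
      (𝓝 (π * (Real.sign v.im - Real.sign u.im) * I)) := by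
  refine tendsto_comp_neg_atTop_iff.mp ?_
  have hneg (w : ℂ) (hw : w.im ≠ 0) (x : ℝ) : Complex.log (((-x : ℝ) : ℂ) - w) =
      Complex.log ((x : ℂ) - -w) - π * Real.sign w.im * I := by
    rw [show ((-x : ℝ) : ℂ) - w = -((x : ℂ) - -w) by push_cast; ring,
      log_neg_eq_log_sub (by simpa using hw)]
    simp
  simp only [hneg u hu, hneg v hv]
  convert (tendsto_log_ofReal_sub_sub_log_ofReal_sub_atTop (-u) (-v)).add_const
    (π * (Real.sign v.im - Real.sign u.im) * I) using 2 with x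
  · ring
  · simp

lemma integral_inv_ofReal_sub_sub_inv_ofReal_sub (hu : u.im ≠ 0) (hv : v.im ≠ 0) :
    ∫ x : ℝ, (((x : ℂ) - u)⁻¹ - ((x : ℂ) - v)⁻¹) =
      π * (Real.sign u.im - Real.sign v.im) * I := by
  rw [integral_of_hasDerivAt_of_tendsto
    (fun x => (hasDerivAt_log_ofReal_sub hu x).sub (hasDerivAt_log_ofReal_sub hv x))
    (integrable_inv_ofReal_sub_sub_inv_ofReal_sub hu hv)
    (tendsto_log_ofReal_sub_sub_log_ofReal_sub_atBot hu hv)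
    (tendsto_log_ofReal_sub_sub_log_ofReal_sub_atTop u v)]
  ring

end CauchyKernel

lemma herglotz_kernel_eq {z : ℂ} (hz : z.im ≠ 0) (x : ℝ) :
    ((x : ℂ) * z + 1) / (((x : ℂ) - z) * (1 + (x : ℂ) ^ 2)) =
      ((((x : ℂ) - z)⁻¹ - ((x : ℂ) - I)⁻¹) +
        (((x : ℂ) - z)⁻¹ - ((x : ℂ) - -I)⁻¹)) / 2 := by
  have := ofReal_sub_ne_zero hz x
  have := ofReal_sub_ne_zero (u := I) (by simp) x
  have := ofReal_sub_ne_zero (u := -I) (by simp) x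
  have hsq : 1 + (x : ℂ) ^ 2 = ((x : ℂ) - I) * ((x : ℂ) - -I) := by
    ring_nf
    rw [I_sq]
    ring
  rw [hsq]
  field_simp
  ring_nf
  rw [I_sq]
  ring

lemma integral_herglotz_kernel {z : ℂ} (hz : z.im ≠ 0) :
    ∫ x : ℝ, ((x : ℂ) * z + 1) / (((x : ℂ) - z) * (1 + (x : ℂ) ^ 2)) =
      π * Real.sign z.im * I := by
  have hI : I.im ≠ 0 := by simp
  have hnI : (-I).im ≠ 0 := by simp
  simp_rw [herglotz_kernel_eq hz]
  rw [integral_div, integral_add (integrable_inv_ofReal_sub_sub_inv_ofReal_sub hz hI)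
      (integrable_inv_ofReal_sub_sub_inv_ofReal_sub hz hnI),
    integral_inv_ofReal_sub_sub_inv_ofReal_sub hz hI,
    integral_inv_ofReal_sub_sub_inv_ofReal_sub hz hnI,
    neg_im, I_im, Real.sign_one, Real.sign_of_neg neg_one_lt_zero]
  push_cast
  ring

/-- For nonreal `z`, `(1/π) ∫ (λz+1)/((λ−z)(1+λ²)) dλ` equals `i` in the upper
half-plane and `−i` in the lower half-plane. -/
theorem stmt_5 (z : ℂ) :
    (0 < z.im →
      ∫ l : ℝ, ((l : ℂ) * z + 1) / (((l : ℂ) - z) * (1 + (l : ℂ) ^ 2)) * (1 / (π : ℂ)) = I) ∧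
    (z.im < 0 →
      ∫ l : ℝ, ((l : ℂ) * z + 1) / (((l : ℂ) - z) * (1 + (l : ℂ) ^ 2)) * (1 / (π : ℂ)) = -I) := by
  have hπ : (π : ℂ) ≠ 0 := ofReal_ne_zero.2 pi_ne_zero
  simp_rw [integral_mul_const]
  constructor
  · intro hz
    rw [integral_herglotz_kernel hz.ne', Real.sign_of_pos hz]
    push_cast
    field_simp
  · intro hz
    rw [integral_herglotz_kernel hz.ne, Real.sign_of_neg hz]
    push_cast
    field_simp
end

section
/- With σ, b, U as above, the unitary operator U and the multiplication operator (Hf)(λ) = λf(λ) on D(H) = { f ∈ L²(σ) : λf ∈ L²(σ) } satisfy U H U* = H − bI; equivalently, for all f ∈ D(H), U(Hf) = (H − bI)(Uf). -/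
/-!
`U` is a weighted composition operator `g ↦ φ · (g ∘ T)` with `T l = l - b` and
`|φ l|² = (1 + l²) / (1 + (l - b)²)`. This factor is exactly the density of `(1 + l²) dσ` at `l`
divided by its density at `T l`, so invariance of `(1 + l²) dσ` under `T` makes `U` an isometry
of `L²(σ)`. The intertwining relation is pointwise algebra, and `λ · Uf = U(Hf) + b · Uf`
shows that `U` maps `D(H)` into `D(H)`.
-/

open MeasureTheory Complex ENNReal

namespace MeasureTheory

variable {α : Type*} [MeasurableSpace α] {σ : Measure α} {w : α → ℝ≥0∞} {T : α → α}

lemma absolutelyContinuous_withDensity_of_ne_zero (hw : Measurable w) (hw0 : ∀ x, w x ≠ 0)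
    (hwt : ∀ x, w x ≠ ∞) : σ ≪ σ.withDensity w := by
  have h := withDensity_absolutelyContinuous (σ.withDensity w) fun x => (w x)⁻¹
  rwa [withDensity_inv_same hw (ae_of_all _ hw0) (ae_of_all _ hwt)] at h

lemma AEStronglyMeasurable.comp_of_measurePreserving_withDensity (hw : Measurable w)
    (hw0 : ∀ x, w x ≠ 0) (hwt : ∀ x, w x ≠ ∞) (hTe : MeasurableEmbedding T)
    (hT : MeasurePreserving T (σ.withDensity w) (σ.withDensity w)) {β : Type*}
    [TopologicalSpace β] {g : α → β} (hg : AEStronglyMeasurable g σ) : AEStronglyMeasurable (fun x => g (T x)) σ := by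
  have hgμ : AEStronglyMeasurable g ((σ.withDensity w).map T) := by
    rw [hT.map_eq]
    exact hg.mono_ac (withDensity_absolutelyContinuous _ _)
  exact (hTe.aestronglyMeasurable_map_iff.1 hgμ).mono_ac
    (absolutelyContinuous_withDensity_of_ne_zero hw hw0 hwt)

section

variable {E : Type*} [NormedRing E] [NormMulClass E]

lemma lintegral_enorm_rpow_mul_comp (hw : Measurable w) (hw0 : ∀ x, w x ≠ 0)
    (hwt : ∀ x, w x ≠ ∞) (hTe : MeasurableEmbedding T)
    (hT : MeasurePreserving T (σ.withDensity w) (σ.withDensity w)) {q : ℝ} (hq : 0 ≤ q)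
    {φ : α → E} (hφ : ∀ x, ‖φ x‖ₑ ^ q = w x / w (T x)) (g : α → E) :
    ∫⁻ x, ‖φ x * g (T x)‖ₑ ^ q ∂σ = ∫⁻ x, ‖g x‖ₑ ^ q ∂σ := by
  have hwσ : ∀ h : α → ℝ≥0∞, ∫⁻ x, h x ∂σ.withDensity w = ∫⁻ x, w x * h x ∂σ := fun h =>
    lintegral_withDensity_eq_lintegral_mul_non_measurable _ hw
      (ae_of_all _ fun x => (hwt x).lt_top) h
  calc ∫⁻ x, ‖φ x * g (T x)‖ₑ ^ q ∂σ
      = ∫⁻ x, w x * ((w (T x))⁻¹ * ‖g (T x)‖ₑ ^ q) ∂σ := by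
        refine lintegral_congr fun x => ?_
        rw [enorm_mul, ENNReal.mul_rpow_of_nonneg _ _ hq, hφ, ENNReal.div_eq_inv_mul, mul_assoc,
          mul_left_comm]
    _ = ∫⁻ x, (w (T x))⁻¹ * ‖g (T x)‖ₑ ^ q ∂σ.withDensity w := (hwσ _).symm
    _ = ∫⁻ x, (w x)⁻¹ * ‖g x‖ₑ ^ q ∂σ.withDensity w :=
        hT.lintegral_comp_emb hTe fun x => (w x)⁻¹ * ‖g x‖ₑ ^ q
    _ = ∫⁻ x, ‖g x‖ₑ ^ q ∂σ := by
        rw [hwσ]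
        refine lintegral_congr fun x => ?_
        rw [← mul_assoc, ENNReal.mul_inv_cancel (hw0 x) (hwt x), one_mul]

lemma eLpNorm_mul_comp_eq (hw : Measurable w) (hw0 : ∀ x, w x ≠ 0)
    (hwt : ∀ x, w x ≠ ∞) (hTe : MeasurableEmbedding T)
    (hT : MeasurePreserving T (σ.withDensity w) (σ.withDensity w)) {p : ℝ≥0∞} (hp0 : p ≠ 0)
    (hpt : p ≠ ∞) {φ : α → E} (hφ : ∀ x, ‖φ x‖ₑ ^ p.toReal = w x / w (T x)) (g : α → E) :
    eLpNorm (fun x => φ x * g (T x)) p σ = eLpNorm g p σ := by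
  simp only [eLpNorm_eq_lintegral_rpow_enorm_toReal hp0 hpt,
    lintegral_enorm_rpow_mul_comp hw hw0 hwt hTe hT toReal_nonneg hφ]

lemma MemLp.mul_comp_of_measurePreserving_withDensity (hw : Measurable w) (hw0 : ∀ x, w x ≠ 0)
    (hwt : ∀ x, w x ≠ ∞) (hTe : MeasurableEmbedding T)
    (hT : MeasurePreserving T (σ.withDensity w) (σ.withDensity w)) {p : ℝ≥0∞} (hp0 : p ≠ 0)
    (hpt : p ≠ ∞) {φ : α → E} (hφm : AEStronglyMeasurable φ σ)
    (hφ : ∀ x, ‖φ x‖ₑ ^ p.toReal = w x / w (T x)) {g : α → E} (hg : MemLp g p σ) :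
    MemLp (fun x => φ x * g (T x)) p σ :=
  ⟨hφm.mul (hg.1.comp_of_measurePreserving_withDensity hw hw0 hwt hTe hT),
    by rw [eLpNorm_mul_comp_eq hw hw0 hwt hTe hT hp0 hpt hφ]; exact hg.2⟩

end

end MeasureTheory

lemma sub_ofReal_sub_I_ne_zero (l b : ℝ) : (l : ℂ) - (b : ℂ) - I ≠ 0 := fun h => by
  simpa using congrArg im h

lemma norm_div_sub_I_sq (l b : ℝ) :
    ‖((l : ℂ) - I) / ((l : ℂ) - (b : ℂ) - I)‖ ^ 2 = (1 + l ^ 2) / (1 + (l - b) ^ 2) := by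
  rw [norm_div, div_pow, Complex.sq_norm, Complex.sq_norm, normSq_apply, normSq_apply]
  simp only [sub_re, sub_im, ofReal_re, ofReal_im, I_re, I_im]
  ring_nf

lemma enorm_div_sub_I_rpow_two (l b : ℝ) :
    ‖((l : ℂ) - I) / ((l : ℂ) - (b : ℂ) - I)‖ₑ ^ (2 : ℝ≥0∞).toReal
      = ENNReal.ofReal (1 + l ^ 2) / ENNReal.ofReal (1 + (l - b) ^ 2) := by
  rw [toReal_ofNat, ENNReal.rpow_two, ← ofReal_norm, ← ENNReal.ofReal_pow (norm_nonneg _),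
    norm_div_sub_I_sq, ENNReal.ofReal_div_of_pos (by positivity)]

theorem stmt_10_general (σ : Measure ℝ) (b : ℝ)
    (hinv : Measure.map (fun x : ℝ => x - b)
        (σ.withDensity fun l : ℝ => ENNReal.ofReal (1 + l ^ 2))
      = σ.withDensity fun l : ℝ => ENNReal.ofReal (1 + l ^ 2))
    (f : ℝ → ℂ) (hf : MemLp f 2 σ)
    (hfm : MemLp (fun l : ℝ => (l : ℂ) * f l) 2 σ) :
    MemLp (fun l : ℝ => ((l : ℂ) - I) / ((l : ℂ) - (b : ℂ) - I) * f (l - b)) 2 σ ∧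
    MemLp (fun l : ℝ =>
      (l : ℂ) * (((l : ℂ) - I) / ((l : ℂ) - (b : ℂ) - I) * f (l - b))) 2 σ ∧
    ∀ l : ℝ,
      ((l : ℂ) - I) / ((l : ℂ) - (b : ℂ) - I) * (((l - b : ℝ) : ℂ) * f (l - b))
        = ((l : ℂ) - (b : ℂ)) * (((l : ℂ) - I) / ((l : ℂ) - (b : ℂ) - I) * f (l - b)) := by
  have hU : ∀ g : ℝ → ℂ, MemLp g 2 σ →
      MemLp (fun l : ℝ => ((l : ℂ) - I) / ((l : ℂ) - (b : ℂ) - I) * g (l - b)) 2 σ :=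
    fun g hg => hg.mul_comp_of_measurePreserving_withDensity (by fun_prop)
      (fun l => (ENNReal.ofReal_pos.2 (by positivity)).ne') (fun _ => ofReal_ne_top)
      (Homeomorph.subRight b).measurableEmbedding ⟨measurable_sub_const b, hinv⟩
      two_ne_zero ofNat_ne_top
      (Continuous.aestronglyMeasurable <| by
        fun_prop (disch := exact (sub_ofReal_sub_I_ne_zero · b)))
      (fun l => enorm_div_sub_I_rpow_two l b)
  have hcomm : ∀ l : ℝ,
      ((l : ℂ) - I) / ((l : ℂ) - (b : ℂ) - I) * (((l - b : ℝ) : ℂ) * f (l - b))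
        = ((l : ℂ) - (b : ℂ)) * (((l : ℂ) - I) / ((l : ℂ) - (b : ℂ) - I) * f (l - b)) :=
    fun l => by push_cast; ring
  refine ⟨hU f hf, ?_, hcomm⟩
  convert (hU _ hfm).add ((hU f hf).const_mul (b : ℂ)) using 1
  funext l
  simp only [Pi.add_apply, hcomm]
  ring

/-- With `σ, b, U` as in the periodic model, `U H U* = H − bI` for the multiplication
operator `(Hf)(λ) = λf(λ)`: `U` preserves the domain and `U(Hf) = (H − bI)(Uf)`. -/
theorem stmt_10 (σ : Measure ℝ) [IsProbabilityMeasure σ] (b : ℝ)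
    (hinv : Measure.map (fun x : ℝ => x - b)
        (σ.withDensity fun l : ℝ => ENNReal.ofReal (1 + l ^ 2))
      = σ.withDensity fun l : ℝ => ENNReal.ofReal (1 + l ^ 2))
    (f : ℝ → ℂ) (hf : MemLp f 2 σ)
    (hfm : MemLp (fun l : ℝ => (l : ℂ) * f l) 2 σ) :
    MemLp (fun l : ℝ => ((l : ℂ) - I) / ((l : ℂ) - (b : ℂ) - I) * f (l - b)) 2 σ ∧
    MemLp (fun l : ℝ =>
      (l : ℂ) * (((l : ℂ) - I) / ((l : ℂ) - (b : ℂ) - I) * f (l - b))) 2 σ ∧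
    ∀ l : ℝ,
      ((l : ℂ) - I) / ((l : ℂ) - (b : ℂ) - I) * (((l - b : ℝ) : ℂ) * f (l - b))
        = ((l : ℂ) - (b : ℂ)) * (((l : ℂ) - I) / ((l : ℂ) - (b : ℂ) - I) * f (l - b)) :=
  stmt_10_general σ b hinv f hf hfm
end
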